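/- arXiv:1711.06219 — 4 statements merged into one kernel-verified Lean document; each statement's English description precedes it below -/
import Mathlib

section
/- Fix an integer q ≥ 1 and real constants t > 0 and C > 0. For n > 1 define α_n = C · (t + q·log n)^{q/2 − 1} / (2^{q/2 − 1} · n^{q/2} · Γ(q/2)), where Γ is the real Gamma function, and define the stabilizing function g(n) = (2n / (t + q·log n))^{q/2} · Γ(q/2) / e. Then lim_{n → ∞} B_L(α_n) · g(n) = C; in particular, when C = 1 the product B_L(α_n)·g(n) converges to 1 as n → ∞. -/
/-!
Writing `L = t + q log n`, the stabilizer is built so that `α_n · g(n) = 2C / (e L)`; hence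
`B_L(α_n) · g(n) = -(2C / L) · log α_n`. Since `(q/2) log n = (L - t)/2`, the logarithm of `α_n` is
`-L/2 + (q/2 - 1) log L + O(1)`, so `-(2/L) log α_n → 1` because `log L / L → 0`.
-/

open Filter Real Topology

noncomputable section

def robustLowerBound (p : ℝ) : ℝ := -exp 1 * p * log p

def adaptiveAlpha (q t C x : ℝ) : ℝ :=
  C * (t + q * log x) ^ (q / 2 - 1) / ((2 : ℝ) ^ (q / 2 - 1) * x ^ (q / 2) * Gamma (q / 2))

def stabilizer (q t x : ℝ) : ℝ :=
  (2 * x / (t + q * log x)) ^ (q / 2) * Gamma (q / 2) / exp 1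

end

section Calibration

variable {q t C x : ℝ}

theorem adaptiveAlpha_mul_stabilizer (hL : 0 < t + q * log x) (hx : 0 < x)
    (hΓ : Gamma (q / 2) ≠ 0) :
    adaptiveAlpha q t C x * stabilizer q t x = 2 * C / (exp 1 * (t + q * log x)) := by
  set L := t + q * log x
  have hpow : (2 * x / L) ^ (q / 2) = 2 ^ (q / 2) * x ^ (q / 2) / L ^ (q / 2) := by
    rw [div_rpow (by positivity) hL.le, mul_rpow zero_le_two hx.le]
  have hL' : L ^ (q / 2 - 1) = L ^ (q / 2) / L := rpow_sub_one hL.ne' _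
  have h2 : (2 : ℝ) ^ (q / 2 - 1) = 2 ^ (q / 2) / 2 := rpow_sub_one two_ne_zero _
  have : 0 < L ^ (q / 2) := rpow_pos_of_pos hL _
  have : 0 < x ^ (q / 2) := rpow_pos_of_pos hx _
  unfold adaptiveAlpha stabilizer
  rw [hpow, hL', h2]
  field_simp

theorem log_adaptiveAlpha (hC : C ≠ 0) (hL : 0 < t + q * log x) (hx : 0 < x)
    (hΓ : Gamma (q / 2) ≠ 0) :
    log (adaptiveAlpha q t C x) =
      log C - (q / 2 - 1) * log 2 - log (Gamma (q / 2)) + t / 2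
        + (q / 2 - 1) * log (t + q * log x) - (t + q * log x) / 2 := by
  have h2 : (2 : ℝ) ^ (q / 2 - 1) ≠ 0 := (rpow_pos_of_pos two_pos _).ne'
  have hxq : x ^ (q / 2) ≠ 0 := (rpow_pos_of_pos hx _).ne'
  have hLq : (t + q * log x) ^ (q / 2 - 1) ≠ 0 := (rpow_pos_of_pos hL _).ne'
  unfold adaptiveAlpha
  rw [log_div (mul_ne_zero hC hLq) (mul_ne_zero (mul_ne_zero h2 hxq) hΓ), log_mul hC hLq,
    log_mul (mul_ne_zero h2 hxq) hΓ, log_mul h2 hxq, log_rpow hL, log_rpow two_pos, log_rpow hx]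
  ring

theorem robustLowerBound_adaptiveAlpha_mul_stabilizer (hC : C ≠ 0) (hL : 0 < t + q * log x)
    (hx : 0 < x) (hΓ : Gamma (q / 2) ≠ 0) :
    robustLowerBound (adaptiveAlpha q t C x) * stabilizer q t x =
      C - 2 * C * ((log C - (q / 2 - 1) * log 2 - log (Gamma (q / 2)) + t / 2
        + (q / 2 - 1) * log (t + q * log x)) / (t + q * log x)) := by
  have hprod := adaptiveAlpha_mul_stabilizer (C := C) hL hx hΓ
  calc robustLowerBound (adaptiveAlpha q t C x) * stabilizer q t x
      = -exp 1 * (adaptiveAlpha q t C x * stabilizer q t x) * log (adaptiveAlpha q t C x) := by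
        unfold robustLowerBound; ring
    _ = _ := by
        rw [hprod, log_adaptiveAlpha hC hL hx hΓ]
        field_simp
        ring

end Calibration

theorem tendsto_const_add_mul_log_div_self_atTop (a b : ℝ) :
    Tendsto (fun x => (a + b * log x) / x) atTop (𝓝 0) := by
  have hlog : Tendsto (fun x => log x / x) atTop (𝓝 0) :=
    isLittleO_log_id_atTop.tendsto_div_nhds_zero
  have hsum := (tendsto_const_nhds (x := a).div_atTop tendsto_id).add (hlog.const_mul b)
  rw [mul_zero, add_zero] at hsum
  refine hsum.congr' ?_
  filter_upwards with x
  simp only [id, add_div, mul_div_assoc]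

theorem arlb_calibration_general (q : ℕ) (hq : 1 ≤ q) (t C : ℝ) (hC : 0 < C) :
    Filter.Tendsto (fun n : ℕ =>
      (fun α : ℝ => -Real.exp 1 * α * Real.log α)
          (C * (t + q * Real.log n) ^ ((q : ℝ) / 2 - 1) /
            ((2 : ℝ) ^ ((q : ℝ) / 2 - 1) * (n : ℝ) ^ ((q : ℝ) / 2) * Real.Gamma ((q : ℝ) / 2))) *
        ((2 * (n : ℝ) / (t + q * Real.log n)) ^ ((q : ℝ) / 2) * Real.Gamma ((q : ℝ) / 2) /
          Real.exp 1))
      Filter.atTop (nhds C) := by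
  change Tendsto (fun n : ℕ => robustLowerBound (adaptiveAlpha q t C n) * stabilizer q t n)
    atTop (𝓝 C)
  have hq0 : (0 : ℝ) < q := by exact_mod_cast hq
  have hL : Tendsto (fun n : ℕ => t + q * log n) atTop atTop :=
    tendsto_atTop_add_const_left _ _ <|
      (tendsto_log_atTop.const_mul_atTop hq0).comp tendsto_natCast_atTop_atTop
  have hΓ : Gamma ((q : ℝ) / 2) ≠ 0 := (Gamma_pos_of_pos (half_pos hq0)).ne'
  have hlim := tendsto_const_nhds (x := C) |>.sub <|
    ((tendsto_const_add_mul_log_div_self_atTop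
      (log C - ((q : ℝ) / 2 - 1) * log 2 - log (Gamma ((q : ℝ) / 2)) + t / 2)
      ((q : ℝ) / 2 - 1)).comp hL).const_mul (2 * C)
  rw [mul_zero, sub_zero] at hlim
  refine hlim.congr' ?_
  filter_upwards [hL.eventually_gt_atTop 0, eventually_gt_atTop 0] with n hLn hn
  exact (robustLowerBound_adaptiveAlpha_mul_stabilizer hC.ne' hLn (by exact_mod_cast hn) hΓ).symm

/-- The Adaptive Robust Lower Bound calibration: for the adaptive α level
`α_n = C * (t + q log n)^{q/2-1} / (2^{q/2-1} n^{q/2} Γ(q/2))` and the stabilizing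
function `g(n) = (2n/(t + q log n))^{q/2} Γ(q/2)/e`, the product
`B_L(α_n) * g(n)` converges to `C` as `n → ∞`, where `B_L(p) = -e p log p`. -/
theorem arlb_calibration (q : ℕ) (hq : 1 ≤ q) (t C : ℝ) (ht : 0 < t) (hC : 0 < C) :
    Filter.Tendsto (fun n : ℕ =>
      (fun α : ℝ => -Real.exp 1 * α * Real.log α)
          (C * (t + q * Real.log n) ^ ((q : ℝ) / 2 - 1) /
            ((2 : ℝ) ^ ((q : ℝ) / 2 - 1) * (n : ℝ) ^ ((q : ℝ) / 2) * Real.Gamma ((q : ℝ) / 2))) *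
        ((2 * (n : ℝ) / (t + q * Real.log n)) ^ ((q : ℝ) / 2) * Real.Gamma ((q : ℝ) / 2) /
          Real.exp 1))
      Filter.atTop (nhds C) :=
  arlb_calibration_general q hq t C hC
end

section
/- Fix reals δ > 0 and W > 0. For each integer n ≥ 2, let Z_n be a random variable with the Gaussian distribution of mean √n·δ and variance 1 (the distribution of the standardized test statistic under the alternative hypothesis), and let p_n = 1 − Φ(Z_n) be the associated one-sided p-value. Then P( p_n ≤ (W/e) · √(log n / n) ) → 1 as n → ∞; equivalently, Φ( Z_{t_n} − √n·δ ) → 0, where t_n = (W/e)·√(log n / n) and Z_t denotes the upper t-quantile of the standard normal distribution (1 − Φ(Z_t) = t). -/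
/-!
Write `m = √n δ`. The Chernoff bound with the Gaussian moment generating function shows that
`Z ~ N(m, 1)` exceeds `m / 2` with probability at least `1 - exp (-m² / 8)`, and that for
`z ≥ m / 2` the p-value `1 - Φ z` is at most `exp (-m² / 8) = exp (-δ² n / 8)`. This decays
exponentially in `n`, whereas the threshold `(W / e) √(log n / n)` decays only like `n^(-1/2)`.
-/

open MeasureTheory Filter Real Set ProbabilityTheory NNReal

section GaussianTail

variable {μ : ℝ} {v : ℝ≥0}

theorem gaussianReal_real_Ici_le_exp (hv : v ≠ 0) {x : ℝ} (hx : 0 ≤ x) :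
    (gaussianReal μ v).real (Ici (μ + x)) ≤ exp (-(x ^ 2 / (2 * v))) := by
  have hv' : (v : ℝ) ≠ 0 := by exact_mod_cast hv
  have h := measure_ge_le_exp_mul_mgf (X := id) (μ := gaussianReal μ v) (μ + x)
    (div_nonneg hx v.coe_nonneg) (integrable_exp_mul_gaussianReal (x / v))
  rw [mgf_id_gaussianReal, ← exp_add] at h
  refine h.trans_eq (congrArg exp ?_)
  field_simp
  ring

theorem gaussianReal_real_Iic_le_exp (hv : v ≠ 0) {x : ℝ} (hx : 0 ≤ x) :
    (gaussianReal μ v).real (Iic (μ - x)) ≤ exp (-(x ^ 2 / (2 * v))) := by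
  have hv' : (v : ℝ) ≠ 0 := by exact_mod_cast hv
  have h := measure_le_le_exp_mul_mgf (X := id) (μ := gaussianReal μ v) (μ - x)
    (neg_nonpos.mpr (div_nonneg hx v.coe_nonneg)) (integrable_exp_mul_gaussianReal (-(x / v)))
  rw [mgf_id_gaussianReal, ← exp_add] at h
  refine h.trans_eq (congrArg exp ?_)
  field_simp
  ring

theorem one_sub_exp_le_gaussianReal_real_Ioi (hv : v ≠ 0) {x : ℝ} (hx : 0 ≤ x) :
    1 - exp (-(x ^ 2 / (2 * v))) ≤ (gaussianReal μ v).real (Ioi (μ - x)) := by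
  rw [← compl_Iic, probReal_compl_eq_one_sub measurableSet_Iic]
  linarith [gaussianReal_real_Iic_le_exp (μ := μ) hv hx]

end GaussianTail

theorem one_sub_integral_Iic_stdNormalDensity (z : ℝ) :
    1 - ∫ t in Iic z, (√(2 * π))⁻¹ * exp (-(t ^ 2) / 2) = (gaussianReal 0 1).real (Ioi z) := by
  have hΦ : (gaussianReal 0 1).real (Iic z) = ∫ t in Iic z, (√(2 * π))⁻¹ * exp (-(t ^ 2) / 2) := by
    rw [measureReal_def, gaussianReal_apply_eq_integral 0 one_ne_zero,
      ENNReal.toReal_ofReal (setIntegral_nonneg measurableSet_Iic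
        fun t _ => gaussianPDFReal_nonneg 0 1 t)]
    simp [gaussianPDFReal]
  rw [← hΦ, ← compl_Iic, probReal_compl_eq_one_sub measurableSet_Iic]

theorem one_sub_integral_Iic_stdNormalDensity_le {x z : ℝ} (hx : 0 ≤ x) (hxz : x ≤ z) :
    1 - ∫ t in Iic z, (√(2 * π))⁻¹ * exp (-(t ^ 2) / 2) ≤ exp (-(x ^ 2 / 2)) := by
  rw [one_sub_integral_Iic_stdNormalDensity]
  calc (gaussianReal 0 1).real (Ioi z) ≤ (gaussianReal 0 1).real (Ici (0 + x)) :=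
        measureReal_mono (Ioi_subset_Ici (by simpa using hxz))
    _ ≤ exp (-(x ^ 2 / 2)) := by
        simpa using gaussianReal_real_Ici_le_exp (μ := 0) one_ne_zero hx

theorem eventually_exp_neg_mul_le_mul_sqrt_log_div {a c : ℝ} (ha : 0 < a) (hc : 0 < c) :
    ∀ᶠ n : ℕ in atTop, exp (-(c * n)) ≤ a * √(log n / n) := by
  have hgrowth := (tendsto_natCast_atTop_atTop (R := ℝ)).eventually
    ((isLittleO_pow_exp_pos_mul_atTop 1 hc).bound ha)
  filter_upwards [hgrowth, eventually_ge_atTop 3] with n hn hn_ge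
  have hn3 : (3 : ℝ) ≤ n := by exact_mod_cast hn_ge
  have hlog : 1 ≤ log n := by
    rw [le_log_iff_exp_le (by linarith)]
    linarith [exp_one_lt_d9]
  have hinv : (n : ℝ)⁻¹ ≤ √(log n / n) := by
    rw [le_sqrt (by positivity) (by positivity), div_eq_mul_inv, sq]
    gcongr
    exact (inv_le_one_of_one_le₀ (by linarith)).trans hlog
  simp only [pow_one, norm_eq_abs, abs_of_nonneg (Nat.cast_nonneg (α := ℝ) n), abs_exp] at hn
  calc exp (-(c * n)) = (exp (c * n))⁻¹ := exp_neg _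
    _ ≤ a * (n : ℝ)⁻¹ := by
        rw [inv_le_comm₀ (exp_pos _) (by positivity), mul_inv, inv_inv, inv_mul_le_iff₀ ha]
        exact hn
    _ ≤ a * √(log n / n) := by gcongr

/-- Alternative-hypothesis half of large sample consistency of the ARLB (q = 1).
If `Z_n` has the Gaussian distribution with mean `√n δ` and variance `1`
(the standardized statistic under the alternative) and `p_n = 1 - Φ(Z_n)` is the
one-sided p-value, then `P(p_n ≤ (W/e) √(log n / n)) → 1` as `n → ∞`. -/
theorem arlb_alternative_consistency (δ W : ℝ) (hδ : 0 < δ) (hW : 0 < W) :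
    Tendsto (fun n : ℕ =>
      (ProbabilityTheory.gaussianReal (Real.sqrt n * δ) 1)
        {z : ℝ |
          1 - (∫ t in Set.Iic z, (Real.sqrt (2 * Real.pi))⁻¹ * Real.exp (-(t ^ 2) / 2)) ≤
            (W / Real.exp 1) * Real.sqrt (Real.log n / n)})
      atTop (nhds 1) := by
  have hexponent (n : ℕ) : (√n * δ / 2) ^ 2 / 2 = δ ^ 2 / 8 * n := by
    rw [div_pow, mul_pow, sq_sqrt n.cast_nonneg]
    ring
  have hlower (n : ℕ) : ENNReal.ofReal (1 - exp (-(δ ^ 2 / 8 * n))) ≤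
      gaussianReal (√n * δ) 1 (Ioi (√n * δ - √n * δ / 2)) := by
    have h := one_sub_exp_le_gaussianReal_real_Ioi (μ := √n * δ) one_ne_zero
      (x := √n * δ / 2) (by positivity)
    rw [NNReal.coe_one, mul_one, hexponent] at h
    exact ENNReal.ofReal_le_of_le_toReal h
  have hsubset : ∀ᶠ n : ℕ in atTop, Ioi (√n * δ - √n * δ / 2) ⊆ {z : ℝ |
      1 - (∫ t in Iic z, (√(2 * π))⁻¹ * exp (-(t ^ 2) / 2)) ≤ (W / exp 1) * √(log n / n)} := by
    filter_upwards [eventually_exp_neg_mul_le_mul_sqrt_log_div (by positivity : 0 < W / exp 1)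
      (by positivity : 0 < δ ^ 2 / 8)] with n hn z hz
    rw [← hexponent] at hn
    exact (one_sub_integral_Iic_stdNormalDensity_le (by positivity) (by linarith [hz.out])).trans hn
  have hlim : Tendsto (fun n : ℕ => ENNReal.ofReal (1 - exp (-(δ ^ 2 / 8 * n)))) atTop (nhds 1) := by
    have hexp := tendsto_exp_neg_atTop_nhds_zero.comp
      ((tendsto_natCast_atTop_atTop (R := ℝ)).const_mul_atTop (by positivity : 0 < δ ^ 2 / 8))
    simpa using ENNReal.tendsto_ofReal (hexp.const_sub 1)
  refine tendsto_of_tendsto_of_tendsto_of_le_of_le' hlim tendsto_const_nhds ?_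
    (Eventually.of_forall fun _ => prob_le_one)
  filter_upwards [hsubset] with n hn using (hlower n).trans (measure_mono hn)
end

section
/- Let σ > 0, k > 0, θ₀ ∈ ℝ, x̄ ∈ ℝ, and let n ≥ 1 be an integer. Write z = √n·(x̄ − θ₀)/σ. Let f₀ be the value at x̄ of the density of the Gaussian distribution with mean θ₀ and variance σ²/n, and let m₁ = ∫_ℝ [density at x̄ of the Gaussian with mean θ and variance σ²/n] · [density at θ of the Gaussian with mean θ₀ and variance k·σ²] dθ. Then f₀ / m₁ = √(1 + k·n) · exp( −(z²/2) / (1 + 1/(k·n)) ). -/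
/-!
By completing the square in `θ`, the product of the `N(θ, a)` likelihood of `x̄` and the
`N(θ₀, b)` prior density of `θ` factors as the `N(θ₀, a + b)` marginal density of `x̄` times the
Gaussian posterior density of `θ`; integrating out `θ` leaves the marginal. The Bayes factor is
therefore the ratio of two Gaussian densities centred at `θ₀`, with variances `a = σ²/n` and
`a + b = σ²/n + kσ²`.
-/

open MeasureTheory Real ProbabilityTheory
open scoped NNReal

namespace ProbabilityTheory

lemma gaussianPDFReal_toNNReal {v : ℝ} (hv : 0 ≤ v) (μ x : ℝ) :
    gaussianPDFReal μ v.toNNReal x = (√(2 * π * v))⁻¹ * rexp (-(x - μ) ^ 2 / (2 * v)) := by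
  rw [gaussianPDFReal, Real.coe_toNNReal v hv]

/-- Likelihood times prior equals marginal times posterior. -/
lemma gaussianPDFReal_mul_gaussianPDFReal (a b : ℝ≥0) (m x θ : ℝ) :
    gaussianPDFReal θ a x * gaussianPDFReal m b θ =
      gaussianPDFReal m (a + b) x *
        gaussianPDFReal ((b * x + a * m) / (a + b)) (a * b / (a + b)) θ := by
  rcases eq_or_ne a 0 with rfl | ha
  · simp
  rcases eq_or_ne b 0 with rfl | hb
  · simp
  have ha' : (0 : ℝ) < a := by positivity
  have hb' : (0 : ℝ) < b := by positivity
  have hv : (2 * π * a) * (2 * π * b) = (2 * π * (a + b)) * (2 * π * (a * b / (a + b))) := by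
    field_simp
  have hexp : -(x - θ) ^ 2 / (2 * a) + -(θ - m) ^ 2 / (2 * b) =
      -(x - m) ^ 2 / (2 * (a + b)) +
        -(θ - (b * x + a * m) / (a + b)) ^ 2 / (2 * (a * b / (a + b))) := by
    field_simp
    ring
  simp only [gaussianPDFReal, NNReal.coe_add, NNReal.coe_mul, NNReal.coe_div]
  calc _ = (√((2 * π * a) * (2 * π * b)))⁻¹ *
        rexp (-(x - θ) ^ 2 / (2 * a) + -(θ - m) ^ 2 / (2 * b)) := by
          rw [Real.sqrt_mul (by positivity : (0 : ℝ) ≤ 2 * π * a), Real.exp_add, mul_inv]; ring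
    _ = _ := by
      rw [hv, hexp, Real.sqrt_mul (by positivity : (0 : ℝ) ≤ 2 * π * (a + b)), Real.exp_add,
        mul_inv]
      ring

lemma integral_gaussianPDFReal_mul_gaussianPDFReal {a b : ℝ≥0} (ha : a ≠ 0) (hb : b ≠ 0)
    (m x : ℝ) :
    ∫ θ, gaussianPDFReal θ a x * gaussianPDFReal m b θ = gaussianPDFReal m (a + b) x := by
  simp_rw [gaussianPDFReal_mul_gaussianPDFReal a b m x]
  rw [integral_const_mul, integral_gaussianPDFReal_eq_one _ (by positivity), mul_one]

lemma gaussianPDFReal_div_gaussianPDFReal_add {a : ℝ≥0} (ha : a ≠ 0) (b : ℝ≥0) (m x : ℝ) :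
    gaussianPDFReal m a x / gaussianPDFReal m (a + b) x =
      √((a + b) / a) * rexp (-(x - m) ^ 2 * b / (2 * a * (a + b))) := by
  have ha' : (0 : ℝ) < a := by positivity
  have hab : (0 : ℝ) < a + b := by positivity
  simp only [gaussianPDFReal, NNReal.coe_add]
  have hroot : √(2 * π * (a + b)) = √((a + b) / a) * √(2 * π * a) := by
    rw [← Real.sqrt_mul (by positivity)]
    congr 1
    field_simp
  have hexp : -(x - m) ^ 2 / (2 * a) =
      -(x - m) ^ 2 * b / (2 * a * (a + b)) + -(x - m) ^ 2 / (2 * (a + b)) := by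
    field_simp
    ring
  rw [hroot, hexp, Real.exp_add]
  field_simp

end ProbabilityTheory

/-- Exact Bayes factor for testing a normal mean with known variance. With an
i.i.d. `N(θ, σ²)` sample of size `n` summarized by `x̄ ~ N(θ, σ²/n)`, a point null
`θ = θ₀`, and conjugate prior `θ ~ N(θ₀, kσ²)` under the alternative, the ratio of
the null density of `x̄` to the marginal density of `x̄` under the alternative is
`√(1+kn) exp(-(z²/2)/(1+1/(kn)))` where `z = √n (x̄-θ₀)/σ`. -/
theorem normal_bayes_factor (σ k θ₀ xbar : ℝ) (hσ : 0 < σ) (hk : 0 < k)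
    (n : ℕ) (hn : 1 ≤ n) :
    ((Real.sqrt (2 * Real.pi * (σ ^ 2 / n)))⁻¹ *
        Real.exp (-(xbar - θ₀) ^ 2 / (2 * (σ ^ 2 / n)))) /
      (∫ θ : ℝ,
        ((Real.sqrt (2 * Real.pi * (σ ^ 2 / n)))⁻¹ *
            Real.exp (-(xbar - θ) ^ 2 / (2 * (σ ^ 2 / n)))) *
        ((Real.sqrt (2 * Real.pi * (k * σ ^ 2)))⁻¹ *
            Real.exp (-(θ - θ₀) ^ 2 / (2 * (k * σ ^ 2))))) =
    Real.sqrt (1 + k * n) *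
      Real.exp (-((Real.sqrt n * (xbar - θ₀) / σ) ^ 2 / 2) / (1 + 1 / (k * n))) := by
  have hn' : (0 : ℝ) < n := by exact_mod_cast hn
  have ha : 0 < σ ^ 2 / n := by positivity
  have hb : 0 < k * σ ^ 2 := by positivity
  simp_rw [← gaussianPDFReal_toNNReal ha.le, ← gaussianPDFReal_toNNReal hb.le]
  rw [integral_gaussianPDFReal_mul_gaussianPDFReal (by simpa using ha) (by simpa using hb),
    gaussianPDFReal_div_gaussianPDFReal_add (by simpa using ha)]
  simp only [Real.coe_toNNReal _ ha.le, Real.coe_toNNReal _ hb.le]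
  congr 2
  · field_simp
  · rw [div_pow, mul_pow, Real.sq_sqrt hn'.le]
    field_simp
    ring
end

section
/- For all real m > 0 and c > 0, ∫_0^∞ v^m · e^{−v} / (v + c)² dv = Γ(m) · ( (m + c) · e^{c} · E_m(c) − 1 ), where Γ is the real Gamma function. -/
/-!
Since `Γ(q) (v + c)^(-q) = ∫₀^∞ s^(q-1) e^(-(v+c)s) ds`, Fubini turns the integral (with `q = 2`)
into `Γ(m+1) ∫₀^∞ s e^(-cs) (1+s)^(-m-1) ds`, and the substitution `t = 1 + s` identifies this
with `Γ(m+1) e^c (E_m(c) - E_{m+1}(c))`. Integration by parts gives the recurrence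
`c E_m(c) + m E_{m+1}(c) = e^(-c)`, which eliminates `E_{m+1}(c)`.
-/

open MeasureTheory Set Real Filter Topology

lemma integrableOn_rpow_mul_exp_neg_mul {a r : ℝ} (ha : 0 < a) (hr : 0 < r) :
    IntegrableOn (fun t : ℝ => t ^ (a - 1) * exp (-(r * t))) (Ioi 0) := by
  simpa using integrableOn_rpow_mul_exp_neg_mul_rpow (s := a - 1) (by linarith) one_pos hr

lemma setIntegral_Ioi_comp_add_right {E : Type*} [NormedAddCommGroup E] [NormedSpace ℝ E]
    (f : ℝ → E) (a d : ℝ) : ∫ x in Ioi a, f (x + d) = ∫ x in Ioi (a + d), f x := by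
  have h := (measurePreserving_add_right volume d).setIntegral_preimage_emb
    (measurableEmbedding_addRight d) f (Ioi (a + d))
  rwa [preimage_add_const_Ioi, add_sub_cancel_right] at h

noncomputable def expIntegralE (p c : ℝ) : ℝ := ∫ t in Ioi 1, exp (-(c * t)) * t ^ (-p)

lemma integrableOn_exp_neg_mul_mul_rpow_neg (p : ℝ) {c : ℝ} (hc : 0 < c) :
    IntegrableOn (fun t : ℝ => exp (-(c * t)) * t ^ (-p)) (Ioi 1) := by
  have h := (integrableOn_rpow_mul_exp_neg_mul (a := |p| + 1) (by positivity) hc).mono_set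
    (Ioi_subset_Ioi zero_le_one)
  refine h.mono' (by fun_prop) ?_
  filter_upwards [self_mem_ae_restrict measurableSet_Ioi] with t (ht : 1 < t)
  rw [norm_of_nonneg (by positivity), mul_comm, add_sub_cancel_right]
  gcongr
  exacts [ht.le, neg_le_abs p]

lemma mul_expIntegralE_add_mul_expIntegralE_add_one (p : ℝ) {c : ℝ} (hc : 0 < c) :
    c * expIntegralE p c + p * expIntegralE (p + 1) c = exp (-c) := by
  have hderiv : ∀ t ∈ Ici (1 : ℝ), HasDerivAt (fun t => -(exp (-(c * t)) * t ^ (-p)))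
      (c * (exp (-(c * t)) * t ^ (-p)) + p * (exp (-(c * t)) * t ^ (-(p + 1)))) t := by
    intro t (ht : 1 ≤ t)
    have hexp : HasDerivAt (fun t => exp (-(c * t))) (exp (-(c * t)) * -c) t := by
      simpa using ((hasDerivAt_id t).const_mul c).fun_neg.exp
    refine (hexp.fun_mul (hasDerivAt_rpow_const (p := -p) (Or.inl (by positivity)))).fun_neg
      |>.congr_deriv ?_
    rw [show -(p + 1) = -p - 1 by ring]
    ring
  have hint_p := (integrableOn_exp_neg_mul_mul_rpow_neg p hc).const_mul c
  have hint_p_add_one := (integrableOn_exp_neg_mul_mul_rpow_neg (p + 1) hc).const_mul p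
  have hlim : Tendsto (fun t => -(exp (-(c * t)) * t ^ (-p))) atTop (𝓝 0) := by
    simpa [mul_comm, neg_mul] using
      (tendsto_rpow_mul_exp_neg_mul_atTop_nhds_zero (-p) c hc).neg
  have h := integral_Ioi_of_hasDerivAt_of_tendsto' hderiv (hint_p.add hint_p_add_one) hlim
  rw [integral_add hint_p hint_p_add_one, integral_const_mul, integral_const_mul] at h
  simpa [expIntegralE] using h

lemma integrableOn_rpow_mul_one_add_rpow_neg {p q c : ℝ} (hp : 0 ≤ p) (hq : 0 < q) (hc : 0 < c) :
    IntegrableOn (fun s : ℝ => s ^ (q - 1) * exp (-(c * s)) * (1 + s) ^ (-p)) (Ioi 0) := by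
  refine (integrableOn_rpow_mul_exp_neg_mul hq hc).mono' (by fun_prop) ?_
  filter_upwards [self_mem_ae_restrict measurableSet_Ioi] with s (hs : 0 < s)
  rw [norm_of_nonneg (by positivity)]
  exact mul_le_of_le_one_right (by positivity)
    (rpow_le_one_of_one_le_of_nonpos (by linarith) (by linarith))

lemma Gamma_mul_integral_rpow_mul_exp_neg_div_rpow_add {p q c : ℝ} (hp : 0 < p) (hq : 0 < q)
    (hc : 0 < c) :
    Gamma q * ∫ v in Ioi 0, v ^ (p - 1) * exp (-v) / (v + c) ^ q =
      Gamma p * ∫ s in Ioi 0, s ^ (q - 1) * exp (-(c * s)) * (1 + s) ^ (-p) := by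
  set μ := volume.restrict (Ioi (0 : ℝ))
  let F : ℝ → ℝ → ℝ := fun s v =>
    s ^ (q - 1) * exp (-(c * s)) * (v ^ (p - 1) * exp (-((1 + s) * v)))
  have hF_swap (s v : ℝ) :
      F s v = v ^ (p - 1) * exp (-v) * (s ^ (q - 1) * exp (-((v + c) * s))) := by
    simp only [F]
    rw [show -((1 + s) * v) = -v + -(s * v) by ring,
      show -((v + c) * s) = -(c * s) + -(s * v) by ring, exp_add, exp_add]
    ring
  have h_slice_v : ∀ s ∈ Ioi (0 : ℝ),
      ∫ v, F s v ∂μ = Gamma p * (s ^ (q - 1) * exp (-(c * s)) * (1 + s) ^ (-p)) := by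
    intro s (hs : 0 < s)
    rw [integral_const_mul, integral_rpow_mul_exp_neg_mul_Ioi hp (by linarith), one_div,
      inv_rpow (by linarith), ← rpow_neg (by linarith)]
    ring
  have h_slice_s : ∀ v ∈ Ioi (0 : ℝ),
      ∫ s, F s v ∂μ = Gamma q * (v ^ (p - 1) * exp (-v) / (v + c) ^ q) := by
    intro v (hv : 0 < v)
    simp_rw [hF_swap]
    rw [integral_const_mul, integral_rpow_mul_exp_neg_mul_Ioi hq (by linarith), one_div,
      inv_rpow (by linarith)]
    ring
  have hF_meas : AEStronglyMeasurable (Function.uncurry F) (μ.prod μ) :=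
    (by fun_prop : Measurable (Function.uncurry F)).aestronglyMeasurable
  have hF_int : Integrable (Function.uncurry F) (μ.prod μ) := by
    refine (integrable_prod_iff hF_meas).mpr ⟨?_, ?_⟩
    · filter_upwards [self_mem_ae_restrict measurableSet_Ioi] with s (hs : 0 < s)
      exact (integrableOn_rpow_mul_exp_neg_mul hp (by linarith : (0 : ℝ) < 1 + s)).const_mul
        (s ^ (q - 1) * exp (-(c * s)))
    · refine ((integrableOn_rpow_mul_one_add_rpow_neg hp.le hq hc).const_mul (Gamma p)).congr ?_
      filter_upwards [self_mem_ae_restrict measurableSet_Ioi] with s (hs : 0 < s)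
      rw [← h_slice_v s hs]
      refine setIntegral_congr_fun measurableSet_Ioi fun v (hv : 0 < v) => ?_
      exact (norm_of_nonneg (by positivity)).symm
  calc Gamma q * ∫ v in Ioi 0, v ^ (p - 1) * exp (-v) / (v + c) ^ q
      = ∫ v, ∫ s, F s v ∂μ ∂μ := by
        rw [← integral_const_mul]
        exact setIntegral_congr_fun measurableSet_Ioi fun v hv => (h_slice_s v hv).symm
    _ = ∫ s, ∫ v, F s v ∂μ ∂μ := (integral_integral_swap hF_int).symm
    _ = Gamma p * ∫ s in Ioi 0, s ^ (q - 1) * exp (-(c * s)) * (1 + s) ^ (-p) := by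
        rw [← integral_const_mul]
        exact setIntegral_congr_fun measurableSet_Ioi h_slice_v

lemma integral_rpow_mul_exp_neg_div_add_sq {p c : ℝ} (hp : 0 < p) (hc : 0 < c) :
    ∫ v in Ioi 0, v ^ (p - 1) * exp (-v) / (v + c) ^ 2 =
      Gamma p * exp c * (expIntegralE (p - 1) c - expIntegralE p c) := by
  have key := Gamma_mul_integral_rpow_mul_exp_neg_div_rpow_add hp two_pos hc
  norm_num only [Gamma_two, rpow_two, rpow_one, one_mul] at key
  rw [key]
  let g : ℝ → ℝ := fun t => exp (-(c * t)) * t ^ (-(p - 1)) - exp (-(c * t)) * t ^ (-p)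
  have hg : ∀ s ∈ Ioi (0 : ℝ), s * exp (-(c * s)) * (1 + s) ^ (-p) = exp c * g (s + 1) := by
    intro s (hs : 0 < s)
    simp only [g]
    rw [show -(p - 1) = -p + 1 by ring, rpow_add (by linarith), rpow_one,
      show -(c * (s + 1)) = -(c * s) + -c by ring, exp_add, add_comm s 1]
    have hexp : exp c * exp (-c) = 1 := by rw [← exp_add, add_neg_cancel, exp_zero]
    linear_combination (-(s * exp (-(c * s)) * (1 + s) ^ (-p))) * hexp
  rw [setIntegral_congr_fun measurableSet_Ioi hg, integral_const_mul,
    setIntegral_Ioi_comp_add_right g 0 1, zero_add, integral_sub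
      (integrableOn_exp_neg_mul_mul_rpow_neg _ hc) (integrableOn_exp_neg_mul_mul_rpow_neg _ hc),
    mul_assoc, expIntegralE, expIntegralE]

/-- For `m > 0` and `c > 0`,
`∫₀^∞ vᵐ e^{-v}/(v+c)² dv = Γ(m) ((m+c) e^c E_m(c) - 1)`,
where `E_m(c) = ∫₁^∞ e^{-ct} t^{-m} dt` is the generalized exponential integral. -/
theorem integral_pow_exp_div_sq (m c : ℝ) (hm : 0 < m) (hc : 0 < c) :
    ∫ v in Set.Ioi (0 : ℝ), v ^ m * Real.exp (-v) / (v + c) ^ 2 =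
      Real.Gamma m *
        ((m + c) * Real.exp c *
            (∫ t in Set.Ioi (1 : ℝ), Real.exp (-(c * t)) * t ^ (-m)) - 1) := by
  have h := integral_rpow_mul_exp_neg_div_add_sq (p := m + 1) (by linarith) hc
  rw [add_sub_cancel_right, Gamma_add_one hm.ne'] at h
  have hrec := mul_expIntegralE_add_mul_expIntegralE_add_one m hc
  have hexp : exp c * exp (-c) = 1 := by rw [← exp_add, add_neg_cancel, exp_zero]
  rw [h, ← expIntegralE]
  linear_combination (-(Gamma m * exp c)) * hrec - Gamma m * hexp
end
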